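/- arXiv:1702.03985 — 2 statements merged into one kernel-verified Lean document; each statement's English description precedes it below -/
import Mathlib

section
/- For every real x ≠ 0, e^x · ∑_{n=0}^∞ (-1)^n x^{3n}/(3n+2)! = (1/(3x²))·(1 − 2 e^{3x/2} cos(π/3 + √3 x/2)). -/
noncomputable def omg : ℂ := ⟨-1/2, Real.sqrt 3 / 2⟩

lemma sqrt3_sq : Real.sqrt 3 * Real.sqrt 3 = 3 := Real.mul_self_sqrt (by norm_num)

lemma omg_sq : omg ^ 2 = ⟨-1/2, -(Real.sqrt 3 / 2)⟩ := by
  rw [pow_two]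
  apply Complex.ext <;>
    simp [omg, Complex.mul_re, Complex.mul_im] <;> nlinarith [sqrt3_sq]

lemma omg_cube : omg ^ 3 = 1 := by
  have : omg ^ 3 = omg ^ 2 * omg := by ring
  rw [this, omg_sq]
  apply Complex.ext <;>
    simp [omg, Complex.mul_re, Complex.mul_im] <;> nlinarith [sqrt3_sq]

lemma omg_sum : 1 + omg + omg ^ 2 = 0 := by
  rw [omg_sq]
  apply Complex.ext <;> simp [omg, Complex.add_re, Complex.add_im] <;> ring

lemma exp_tsum (y : ℂ) : Complex.exp y = ∑' n : ℕ, y ^ n / n.factorial := by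
  rw [Complex.exp_eq_exp_ℂ, NormedSpace.exp_eq_tsum_div]

lemma summ (y : ℂ) : Summable (fun n : ℕ => y ^ n / n.factorial) :=
  NormedSpace.expSeries_div_summable y

noncomputable def coefc (m : ℕ) : ℂ := 1 + omg ^ (m + 1) + omg ^ (2 * m + 2)

lemma omg_pow_mod (m : ℕ) : omg ^ m = omg ^ (m % 3) := by
  conv_lhs => rw [← Nat.div_add_mod m 3]
  rw [pow_add, pow_mul, omg_cube, one_pow, one_mul]

lemma coefc_eq_zero {m : ℕ} (h : m % 3 ≠ 2) : coefc m = 0 := by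
  have h3 : m % 3 < 3 := Nat.mod_lt _ (by norm_num)
  unfold coefc
  rw [omg_pow_mod (m+1), omg_pow_mod (2*m+2),
    Nat.add_mod m 1, Nat.add_mod (2*m) 2, Nat.mul_mod 2 m]
  interval_cases h' : m % 3 <;> simp_all <;>
    [skip; skip] <;> norm_num <;> linear_combination omg_sum

lemma coefc_res2 (n : ℕ) : coefc (3 * n + 2) = 3 := by
  unfold coefc
  rw [omg_pow_mod (3*n+2+1), omg_pow_mod (2*(3*n+2)+2)]
  have h1 : (3*n+2+1) % 3 = 0 := by omega
  have h2 : (2*(3*n+2)+2) % 3 = 0 := by omega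
  rw [h1, h2]; norm_num

lemma trisection (y : ℂ) :
    (3 : ℂ) * ∑' n : ℕ, y ^ (3 * n + 2) / (3 * n + 2).factorial =
      Complex.exp y + omg * Complex.exp (omg * y) + omg ^ 2 * Complex.exp (omg ^ 2 * y) := by
  have key : ∀ m : ℕ, y ^ m / m.factorial + omg * ((omg * y) ^ m / m.factorial)
      + omg ^ 2 * ((omg ^ 2 * y) ^ m / m.factorial) = coefc m * y ^ m / m.factorial := by
    intro m
    unfold coefc
    rw [mul_pow, mul_pow, ← pow_mul]
    field_simp
    ring
  have s1 := summ y
  have s2 := (summ (omg * y)).mul_left omg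
  have s3 := (summ (omg ^ 2 * y)).mul_left (omg ^ 2)
  have hrhs : Complex.exp y + omg * Complex.exp (omg * y) + omg ^ 2 * Complex.exp (omg ^ 2 * y)
      = ∑' m : ℕ, coefc m * y ^ m / m.factorial := by
    rw [exp_tsum y, exp_tsum (omg * y), exp_tsum (omg ^ 2 * y),
      ← tsum_mul_left (a := omg), ← tsum_mul_left (a := omg ^ 2),
      ← Summable.tsum_add s1 s2, ← Summable.tsum_add (s1.add s2) s3]
    exact tsum_congr key
  rw [hrhs]
  have hreindex : ∑' m : ℕ, coefc m * y ^ m / m.factorial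
      = ∑' n : ℕ, coefc (3 * n + 2) * y ^ (3 * n + 2) / (3 * n + 2).factorial := by
    refine (Function.Injective.tsum_eq (g := fun n => 3 * n + 2) (fun a b h => by dsimp at h; omega) ?_).symm
    intro m hm
    by_contra hr
    simp only [Set.mem_range, not_exists] at hr
    have : m % 3 = 2 := by
      by_contra h2
      exact hm (by simp [coefc_eq_zero h2])
    exact hr (m / 3) (by omega)
  rw [hreindex, ← tsum_mul_left]
  apply tsum_congr
  intro n
  rw [coefc_res2]
  ring

lemma eval (x : ℝ) :
    1 + omg * Complex.exp ((1 - omg) * x) + omg ^ 2 * Complex.exp ((1 - omg ^ 2) * x)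
      = ((1 - 2 * Real.exp (3 * x / 2) * Real.cos (Real.pi / 3 + Real.sqrt 3 * x / 2) : ℝ) : ℂ) := by
  rw [omg_sq]
  apply Complex.ext <;>
    simp [omg, Complex.add_re, Complex.add_im, Complex.mul_re, Complex.mul_im,
      Complex.exp_re, Complex.exp_im, Complex.sub_re, Complex.sub_im,
      Complex.cos_ofReal_re, Complex.sin_ofReal_re, Complex.cos_ofReal_im, Complex.sin_ofReal_im,
      Real.cos_add, Real.sin_add, Real.cos_pi_div_three, Real.sin_pi_div_three,
      mul_comm, mul_assoc, mul_left_comm] <;>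
    ring_nf <;>
    rw [show ((x : ℂ) * (Real.sqrt 3 : ℝ) * (1/2)) = ((x * Real.sqrt 3 * (1/2) : ℝ) : ℂ) by
      push_cast; ring] <;>
    simp only [← Complex.ofReal_sin, ← Complex.ofReal_cos, Complex.ofReal_re,
      Complex.ofReal_im] <;>
    ring_nf

theorem exp_mul_alt_trisection2 (x : ℝ) (hx : x ≠ 0) :
    Real.exp x * ∑' n : ℕ, (-1) ^ n * x ^ (3 * n) / (3 * n + 2).factorial =
      1 / (3 * x ^ 2) *
        (1 - 2 * Real.exp (3 * x / 2) * Real.cos (Real.pi / 3 + Real.sqrt 3 * x / 2)) := by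
  set S : ℝ := ∑' n : ℕ, (-1) ^ n * x ^ (3 * n) / (3 * n + 2).factorial with hS
  have key : 3 * x ^ 2 * (Real.exp x * S) =
      1 - 2 * Real.exp (3 * x / 2) * Real.cos (Real.pi / 3 + Real.sqrt 3 * x / 2) := by
    have hcast : ((S : ℝ) : ℂ) = ∑' n : ℕ, ((-1) ^ n * (x : ℂ) ^ (3 * n) / (3 * n + 2).factorial) := by
      rw [hS, Complex.ofReal_tsum]
      apply tsum_congr
      intro n
      push_cast
      ring
    have hx2 : ((x : ℂ)) ^ 2 * ((S : ℝ) : ℂ) =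
        ∑' n : ℕ, (-(x : ℂ)) ^ (3 * n + 2) / (3 * n + 2).factorial := by
      rw [hcast, ← tsum_mul_left]
      apply tsum_congr
      intro n
      have hneg : (-(x : ℂ)) ^ (3 * n + 2) = (-1) ^ n * (x : ℂ) ^ (3 * n + 2) := by
        rw [neg_pow]
        congr 1
        rw [pow_add, pow_mul]
        norm_num
      rw [hneg, pow_add]
      ring
    have htri := trisection (-(x : ℂ))
    have hmain : ((3 * x ^ 2 * (Real.exp x * S) : ℝ) : ℂ) =
        ((1 - 2 * Real.exp (3 * x / 2) * Real.cos (Real.pi / 3 + Real.sqrt 3 * x / 2) : ℝ) : ℂ) := by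
      have h1 : ((3 * x ^ 2 * (Real.exp x * S) : ℝ) : ℂ) =
          Complex.exp x * (3 * ((x : ℂ) ^ 2 * ((S : ℝ) : ℂ))) := by
        push_cast [Complex.ofReal_exp]
        ring
      rw [h1, hx2, htri]
      have e1 : Complex.exp x * Complex.exp (-(x : ℂ)) = 1 := by
        rw [← Complex.exp_add]; simp
      have e2 : Complex.exp x * Complex.exp (omg * -(x : ℂ)) = Complex.exp ((1 - omg) * x) := by
        rw [← Complex.exp_add]; congr 1; ring
      have e3 : Complex.exp x * Complex.exp (omg ^ 2 * -(x : ℂ)) =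
          Complex.exp ((1 - omg ^ 2) * x) := by
        rw [← Complex.exp_add]; congr 1; ring
      calc Complex.exp x * (Complex.exp (-(x:ℂ)) + omg * Complex.exp (omg * -(x:ℂ))
              + omg ^ 2 * Complex.exp (omg ^ 2 * -(x:ℂ)))
          = Complex.exp x * Complex.exp (-(x:ℂ))
            + omg * (Complex.exp x * Complex.exp (omg * -(x:ℂ)))
            + omg ^ 2 * (Complex.exp x * Complex.exp (omg ^ 2 * -(x:ℂ))) := by ring
        _ = 1 + omg * Complex.exp ((1 - omg) * x) + omg ^ 2 * Complex.exp ((1 - omg ^ 2) * x) := by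
            rw [e1, e2, e3]
        _ = _ := eval x
    exact_mod_cast hmain
  have hx2ne : (3 : ℝ) * x ^ 2 ≠ 0 := by positivity
  rw [one_div, inv_mul_eq_div, eq_div_iff hx2ne]
  linarith [key]
end

section
/- For every real x, e^x · ∑_{n=0}^∞ x^{3n}/(3n)! = (2/3) ∑_{m=0}^∞ (x^m/m!) · (2^{m-1} + cos(mπ/3)). -/
/-!
For a primitive cube root of unity `ω`, the roots-of-unity filter gives
`3 ∑ z^{3n}/(3n)! = e^z + e^{ωz} + e^{ω²z}`. Multiplying by `e^z` turns this into
`e^{2z} + e^{(1+ω)z} + e^{(1+ω²)z}`, and `1 + ω`, `1 + ω²` are `ζ = e^{iπ/3}` and `ζ⁻¹`.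
On the other side `2 cos(mπ/3) = ζ^m + ζ^{-m}`, so the right-hand series sums to
`(e^{2z} + e^{ζz} + e^{ζ⁻¹z}) / 2`. The identity holds for every complex `z`; the real
statement is its restriction to the real line.
-/

open Complex Finset
open scoped Real

theorem IsPrimitiveRoot.sum_range_pow_pow {R : Type*} [CommRing R] [IsDomain R] {ω : R} {n : ℕ}
    (hω : IsPrimitiveRoot ω n) (j : ℕ) :
    ∑ k ∈ range n, (ω ^ k) ^ j = if n ∣ j then (n : R) else 0 := by
  simp_rw [← pow_mul, mul_comm _ j, pow_mul]
  split_ifs with h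
  · simp [(hω.pow_eq_one_iff_dvd j).mpr h]
  · have hne : ω ^ j - 1 ≠ 0 := sub_ne_zero.mpr fun h1 => h ((hω.pow_eq_one_iff_dvd j).mp h1)
    apply (mul_right_injective₀ hne).eq_iff.mp
    rw [mul_geom_sum, ← pow_mul, mul_comm, pow_mul, hω.pow_eq_one, one_pow, sub_self, mul_zero]

theorem IsPrimitiveRoot.hasSum_sum_cexp_pow_mul {ω : ℂ} {n : ℕ} (hω : IsPrimitiveRoot ω n)
    (z : ℂ) :
    HasSum (fun j => n * (z ^ (n * j) / (n * j).factorial))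
      (∑ k ∈ range n, cexp (ω ^ k * z)) := by
  rcases n.eq_zero_or_pos with rfl | hn
  · simp
  have hsum : HasSum (fun j => ∑ k ∈ range n, (ω ^ k * z) ^ j / j.factorial)
      (∑ k ∈ range n, cexp (ω ^ k * z)) :=
    hasSum_sum fun _ _ => exp_eq_exp_ℂ ▸ NormedSpace.expSeries_div_hasSum_exp _
  have hterm : (fun j => ∑ k ∈ range n, (ω ^ k * z) ^ j / j.factorial) =
      fun j => if n ∣ j then n * (z ^ j / j.factorial) else 0 := by
    ext j
    simp_rw [mul_pow, ← sum_div, ← sum_mul, hω.sum_range_pow_pow]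
    split_ifs <;> ring
  rw [hterm, ← (mul_right_injective₀ hn.ne').hasSum_iff] at hsum
  · simpa [Function.comp_def] using hsum
  · rintro j hj
    rw [if_neg]
    rintro ⟨i, rfl⟩
    exact hj ⟨i, rfl⟩

theorem one_add_sq_of_add_inv_eq_one {K : Type*} [Field K] {ζ : K} (h : ζ + ζ⁻¹ = 1) :
    1 + ζ ^ 2 = ζ := by
  have hζ : ζ ≠ 0 := by rintro rfl; simp at h
  linear_combination ζ * h - mul_inv_cancel₀ hζ

theorem one_add_pow_four_of_add_inv_eq_one {K : Type*} [Field K] {ζ : K} (h : ζ + ζ⁻¹ = 1) :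
    1 + ζ ^ 4 = ζ⁻¹ := by
  linear_combination (ζ * (ζ + 1)) * one_add_sq_of_add_inv_eq_one h - h

theorem cexp_pi_div_three_mul_I_add_inv : cexp (π / 3 * I) + (cexp (π / 3 * I))⁻¹ = 1 := by
  have hcos : ((Real.cos (π / 3) : ℝ) : ℂ) = 1 / 2 := by simp [Real.cos_pi_div_three]
  push_cast at hcos
  have h := two_cos (π / 3)
  rw [hcos, neg_mul, exp_neg] at h
  linear_combination -h

theorem two_mul_cos_nat_mul_pi_div_three (m : ℕ) :
    2 * cos (m * π / 3) = cexp (π / 3 * I) ^ m + (cexp (π / 3 * I))⁻¹ ^ m := by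
  rw [two_cos, ← exp_neg, ← exp_nat_mul, ← exp_nat_mul]
  ring_nf

theorem isPrimitiveRoot_cexp_pi_div_three_mul_I_sq :
    IsPrimitiveRoot (cexp (π / 3 * I) ^ 2) 3 := by
  convert Complex.isPrimitiveRoot_exp 3 (by norm_num) using 1
  rw [← exp_nat_mul]
  push_cast
  ring_nf

theorem cexp_mul_tsum_pow_three_mul_div_factorial (z : ℂ) :
    cexp z * ∑' n : ℕ, z ^ (3 * n) / (3 * n).factorial =
      (cexp (2 * z) + cexp (cexp (π / 3 * I) * z) + cexp ((cexp (π / 3 * I))⁻¹ * z)) / 3 := by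
  set ζ := cexp (π / 3 * I)
  have hζ : ζ + ζ⁻¹ = 1 := cexp_pi_div_three_mul_I_add_inv
  have htri := (isPrimitiveRoot_cexp_pi_div_three_mul_I_sq.hasSum_sum_cexp_pow_mul z).tsum_eq
  rw [tsum_mul_left] at htri
  push_cast at htri
  have hexp_mul : ∀ w : ℂ, cexp z * cexp (w * z) = cexp ((1 + w) * z) := fun w => by
    rw [← exp_add]; ring_nf
  calc cexp z * ∑' n : ℕ, z ^ (3 * n) / (3 * n).factorial
      = (∑ k ∈ range 3, cexp z * cexp ((ζ ^ 2) ^ k * z)) / 3 := by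
        rw [← mul_sum, ← htri]; ring
    _ = _ := by
        simp only [sum_range_succ, range_zero, sum_empty, hexp_mul, ← pow_mul]
        rw [one_add_sq_of_add_inv_eq_one hζ, one_add_pow_four_of_add_inv_eq_one hζ]
        norm_num

theorem hasSum_pow_div_factorial_mul_two_zpow_add_cos (z : ℂ) :
    HasSum (fun m : ℕ => z ^ m / m.factorial * ((2 : ℂ) ^ ((m : ℤ) - 1) + cos (m * π / 3)))
      ((cexp (2 * z) + cexp (cexp (π / 3 * I) * z) + cexp ((cexp (π / 3 * I))⁻¹ * z)) / 2) := by
  set ζ := cexp (π / 3 * I)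
  have hexp : ∀ w : ℂ, HasSum (fun m : ℕ => (w * z) ^ m / m.factorial) (cexp (w * z)) := fun _ =>
    exp_eq_exp_ℂ ▸ NormedSpace.expSeries_div_hasSum_exp _
  have hterm : ∀ m : ℕ, z ^ m / m.factorial * ((2 : ℂ) ^ ((m : ℤ) - 1) + cos (m * π / 3)) =
      ((2 * z) ^ m / m.factorial + (ζ * z) ^ m / m.factorial +
        (ζ⁻¹ * z) ^ m / m.factorial) / 2 := by
    intro m
    rw [zpow_sub₀ two_ne_zero, zpow_natCast, zpow_one]
    linear_combination (z ^ m / m.factorial / 2) * two_mul_cos_nat_mul_pi_div_three m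
  simpa only [hterm] using (((hexp 2).add (hexp ζ)).add (hexp ζ⁻¹)).div_const 2

theorem cexp_mul_tsum_pow_three_mul_div_factorial_eq_tsum (z : ℂ) :
    cexp z * ∑' n : ℕ, z ^ (3 * n) / (3 * n).factorial =
      2 / 3 * ∑' m : ℕ, z ^ m / m.factorial * ((2 : ℂ) ^ ((m : ℤ) - 1) + cos (m * π / 3)) := by
  rw [cexp_mul_tsum_pow_three_mul_div_factorial,
    (hasSum_pow_div_factorial_mul_two_zpow_add_cos z).tsum_eq]
  ring

theorem exp_mul_trisection_series (x : ℝ) :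
    Real.exp x * ∑' n : ℕ, x ^ (3 * n) / (3 * n).factorial =
      2 / 3 * ∑' m : ℕ, x ^ m / m.factorial *
        ((2 : ℝ) ^ ((m : ℤ) - 1) + Real.cos (m * Real.pi / 3)) := by
  apply ofReal_injective
  push_cast [ofReal_tsum]
  exact cexp_mul_tsum_pow_three_mul_div_factorial_eq_tsum x
end
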